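/- Let K(x) = (1/2)∫_{|x|}^∞ e^{-t}/t dt. Define L(u)(x) = u(x) - ∫_0^∞ K(x-y) u(y) dy. Then the function ū(x) = 1 + x (for x ≥ 0) satisfies L(ū)(x) = (e^{-x}/4)(1+x) - (x/2)K(x)(2+x) and this quantity is nonnegative for all x ≥ 0. -/

import Mathlib

/-!
`K` is even with `K' x = -exp (-x) / (2 * x)` for `x > 0`, so `t * K t - exp (-t) / 2` and
`t ^ 2 * K t / 2 - (t + 1) * exp (-t) / 4` are antiderivatives of `K` and `t * K t` on `(0, ∞)`
vanishing at infinity; `K` has total mass `1` and `t * K t` is odd. Substituting `s = x - y`, the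
convolution of `K` with `1 + y` over `y > 0` is the integral of `K s * (1 + x - s)` over `ℝ`, namely
`1 + x`, minus its integral over `(x, ∞)`, which the antiderivatives evaluate. The resulting defect
equals `∫ t in Ioi x, ((1 + t) * K t - exp (-t) / 2)`, which is nonnegative because
`exp (-t) / (2 * (1 + t)) ≤ K t`: the left side is the integral over `(t, ∞)` of
`exp (-s) * (2 + s) / (2 * (1 + s) ^ 2) ≤ exp (-s) / (2 * s)`.
-/

open MeasureTheory Real Set Filter

noncomputable def K (x : ℝ) : ℝ := (1/2) * ∫ t in Set.Ioi |x|, Real.exp (-t) / t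

open scoped Topology

lemma continuousOn_exp_neg_div : ContinuousOn (fun t => exp (-t) / t) (Ioi 0) := fun t ht => by
  have : t ≠ 0 := ht.ne'
  fun_prop (disch := assumption)

lemma integrableOn_exp_neg_div_Ioi {a : ℝ} (ha : 0 < a) :
    IntegrableOn (fun t => exp (-t) / t) (Ioi a) := by
  refine ((integrableOn_exp_neg_Ioi a).mul_const a⁻¹).mono'
    ((continuousOn_exp_neg_div.mono (Ioi_subset_Ioi ha.le)).aestronglyMeasurable
      measurableSet_Ioi) ?_
  filter_upwards [ae_restrict_mem measurableSet_Ioi] with t ht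
  have ht0 : 0 < t := ha.trans ht
  rw [norm_of_nonneg (by positivity), div_eq_mul_inv]
  gcongr
  exact ht.le

lemma K_abs (x : ℝ) : K |x| = K x := by simp [K]

lemma K_neg (x : ℝ) : K (-x) = K x := by simp [K]

lemma K_nonneg (x : ℝ) : 0 ≤ K x :=
  mul_nonneg (by norm_num) <| setIntegral_nonneg measurableSet_Ioi fun t ht =>
    have : 0 < t := (abs_nonneg x).trans_lt ht
    by positivity

lemma K_le_exp_neg_div {x : ℝ} (hx : 0 < x) : K x ≤ exp (-x) / (2 * x) := by
  have hle : ∫ t in Ioi x, exp (-t) / t ≤ ∫ t in Ioi x, exp (-t) * x⁻¹ :=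
    setIntegral_mono_on (integrableOn_exp_neg_div_Ioi hx)
      ((integrableOn_exp_neg_Ioi x).mul_const _) measurableSet_Ioi fun t ht => by
        rw [div_eq_mul_inv]; gcongr; exact ht.le
  rw [integral_mul_const, integral_exp_neg_Ioi] at hle
  rw [K, abs_of_pos hx]
  calc (1 / 2) * ∫ t in Ioi x, exp (-t) / t ≤ (1 / 2) * (exp (-x) * x⁻¹) := by gcongr
    _ = exp (-x) / (2 * x) := by field_simp

lemma K_eq_sub_intervalIntegral {y : ℝ} (hy : 0 < y) :
    K y = K 1 - (1 / 2) * ∫ t in (1 : ℝ)..y, exp (-t) / t := by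
  rw [← intervalIntegral.integral_Ioi_sub_Ioi' (integrableOn_exp_neg_div_Ioi one_pos)
    (integrableOn_exp_neg_div_Ioi hy), K, K, abs_of_pos hy, abs_one]
  ring

lemma hasDerivAt_K {x : ℝ} (hx : 0 < x) : HasDerivAt K (-(exp (-x) / (2 * x))) x := by
  have hint : HasDerivAt (fun y => ∫ t in (1 : ℝ)..y, exp (-t) / t) (exp (-x) / x) x :=
    intervalIntegral.integral_hasDerivAt_right
      (continuousOn_exp_neg_div.mono fun t ht =>
        lt_of_lt_of_le (lt_min one_pos hx) ht.1).intervalIntegrable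
      (continuousOn_exp_neg_div.stronglyMeasurableAtFilter isOpen_Ioi x hx)
      (continuousOn_exp_neg_div.continuousAt (Ioi_mem_nhds hx))
  have hK : (fun y => K 1 - (1 / 2) * ∫ t in (1 : ℝ)..y, exp (-t) / t) =ᶠ[𝓝 x] K :=
    eventually_of_mem (Ioi_mem_nhds hx) fun y hy => (K_eq_sub_intervalIntegral hy).symm
  refine (((hint.const_mul (1 / 2)).const_sub (K 1)).congr_of_eventuallyEq hK.symm).congr_deriv ?_
  field_simp

lemma K_le_K_one_sub_log {a : ℝ} (ha : 0 < a) (ha1 : a ≤ 1) : K a ≤ K 1 - log a / 2 := by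
  have hle : ∫ t in a..1, exp (-t) / t ≤ ∫ t in a..1, t⁻¹ :=
    intervalIntegral.integral_mono_on ha1
      (ContinuousOn.intervalIntegrable_of_Icc ha1
        (continuousOn_exp_neg_div.mono fun t ht => ha.trans_le ht.1))
      (intervalIntegral.intervalIntegrable_inv
        (fun t ht => (ha.trans_le (uIcc_of_le ha1 ▸ ht).1).ne') continuousOn_id)
      fun t ht => by
        have ht0 : 0 < t := ha.trans_le ht.1
        rw [div_eq_mul_inv]
        exact mul_le_of_le_one_left (by positivity) (exp_le_one_iff.2 (by linarith))
  rw [integral_inv_of_pos ha one_pos, one_div, log_inv] at hle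
  rw [K_eq_sub_intervalIntegral ha, intervalIntegral.integral_symm]
  linarith

lemma tendsto_mul_K_nhdsGT_zero : Tendsto (fun t => t * K t) (𝓝[>] 0) (𝓝 0) := by
  have hbound : Tendsto (fun t => t * K 1 - log t * t / 2) (𝓝[>] 0) (𝓝 0) := by
    have hlog : Tendsto (fun t => log t * t) (𝓝[>] 0) (𝓝 0) := by
      simpa using tendsto_log_mul_rpow_nhdsGT_zero one_pos
    have hid : Tendsto (fun t : ℝ => t) (𝓝[>] 0) (𝓝 0) := nhdsWithin_le_nhds
    simpa using (hid.mul_const (K 1)).sub (hlog.div_const 2)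
  refine squeeze_zero' (eventually_nhdsWithin_of_forall fun t ht =>
    mul_nonneg (le_of_lt ht) (K_nonneg t)) ?_ hbound
  filter_upwards [Ioo_mem_nhdsGT one_pos] with t ht
  have := mul_le_mul_of_nonneg_left (K_le_K_one_sub_log ht.1 ht.2.le) ht.1.le
  linarith

lemma continuousWithinAt_mul_K {x : ℝ} (hx : 0 ≤ x) :
    ContinuousWithinAt (fun t => t * K t) (Ici x) x := by
  rcases hx.eq_or_lt with rfl | hx
  -- `K 0` is a junk value, but it is multiplied by `0`.
  · rw [← continuousWithinAt_Ioi_iff_Ici, ContinuousWithinAt, zero_mul]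
    exact tendsto_mul_K_nhdsGT_zero
  · exact ((hasDerivAt_id x).mul (hasDerivAt_K hx)).continuousAt.continuousWithinAt

lemma mul_K_le_exp_neg {t : ℝ} (ht : 0 < t) : t * K t ≤ exp (-t) / 2 :=
  calc t * K t ≤ t * (exp (-t) / (2 * t)) := by gcongr; exact K_le_exp_neg_div ht
    _ = exp (-t) / 2 := by field_simp

lemma tendsto_mul_K_atTop : Tendsto (fun t => t * K t) atTop (𝓝 0) :=
  squeeze_zero' (eventually_atTop.2 ⟨0, fun t ht => mul_nonneg ht (K_nonneg t)⟩)
    (eventually_atTop.2 ⟨1, fun t ht => mul_K_le_exp_neg (one_pos.trans_le ht)⟩)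
    (by simpa using tendsto_exp_neg_atTop_nhds_zero.div_const 2)

lemma hasDerivAt_exp_neg (t : ℝ) : HasDerivAt (fun s => exp (-s)) (-exp (-t)) t := by
  simpa using (hasDerivAt_neg t).exp

lemma hasDerivAt_mul_K_sub_exp_neg {t : ℝ} (ht : 0 < t) :
    HasDerivAt (fun s => s * K s - exp (-s) / 2) (K t) t := by
  refine (((hasDerivAt_id' t).mul (hasDerivAt_K ht)).sub
    ((hasDerivAt_exp_neg t).div_const 2)).congr_deriv ?_
  field_simp
  ring

lemma continuousWithinAt_mul_K_sub_exp_neg {x : ℝ} (hx : 0 ≤ x) :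
    ContinuousWithinAt (fun s => s * K s - exp (-s) / 2) (Ici x) x :=
  (continuousWithinAt_mul_K hx).sub (by fun_prop)

lemma tendsto_mul_K_sub_exp_neg_atTop :
    Tendsto (fun s => s * K s - exp (-s) / 2) atTop (𝓝 0) := by
  simpa using tendsto_mul_K_atTop.sub (tendsto_exp_neg_atTop_nhds_zero.div_const 2)

lemma hasDerivAt_sq_mul_K_sub_exp_neg {t : ℝ} (ht : 0 < t) :
    HasDerivAt (fun s => s / 2 * (s * K s) - (s + 1) * exp (-s) / 4) (t * K t) t := by
  refine ((((hasDerivAt_id' t).div_const 2).mul ((hasDerivAt_id' t).mul (hasDerivAt_K ht))).sub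
    ((((hasDerivAt_id' t).add_const 1).mul (hasDerivAt_exp_neg t)).div_const 4)).congr_deriv ?_
  simp only [Pi.mul_apply]
  field_simp
  ring

lemma continuousWithinAt_sq_mul_K_sub_exp_neg {x : ℝ} (hx : 0 ≤ x) :
    ContinuousWithinAt (fun s => s / 2 * (s * K s) - (s + 1) * exp (-s) / 4) (Ici x) x :=
  ((continuous_id.div_const 2).continuousWithinAt.mul (continuousWithinAt_mul_K hx)).sub
    (by fun_prop)

lemma tendsto_sq_mul_K_sub_exp_neg_atTop :
    Tendsto (fun s => s / 2 * (s * K s) - (s + 1) * exp (-s) / 4) atTop (𝓝 0) := by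
  have hexp : Tendsto (fun s => s * exp (-s)) atTop (𝓝 0) := by
    simpa using tendsto_pow_mul_exp_neg_atTop_nhds_zero 1
  have hsq : Tendsto (fun s => s / 2 * (s * K s)) atTop (𝓝 0) :=
    squeeze_zero' (eventually_atTop.2 ⟨0, fun s hs => mul_nonneg (by positivity)
        (mul_nonneg hs (K_nonneg s))⟩)
      (eventually_atTop.2 ⟨1, fun s hs => calc
        s / 2 * (s * K s) ≤ s / 2 * (exp (-s) / 2) := by
          gcongr; exact mul_K_le_exp_neg (one_pos.trans_le hs)
        _ = s * exp (-s) / 4 := by ring⟩)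
      (by simpa using hexp.div_const 4)
  simpa [add_mul] using hsq.sub ((hexp.add tendsto_exp_neg_atTop_nhds_zero).div_const 4)

lemma integrableOn_K_Ioi {x : ℝ} (hx : 0 ≤ x) : IntegrableOn K (Ioi x) :=
  integrableOn_Ioi_deriv_of_nonneg (continuousWithinAt_mul_K_sub_exp_neg hx)
    (fun _ ht => hasDerivAt_mul_K_sub_exp_neg (hx.trans_lt ht)) (fun t _ => K_nonneg t)
    tendsto_mul_K_sub_exp_neg_atTop

lemma integral_K_Ioi {x : ℝ} (hx : 0 ≤ x) : ∫ t in Ioi x, K t = exp (-x) / 2 - x * K x := by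
  rw [integral_Ioi_of_hasDerivAt_of_nonneg (continuousWithinAt_mul_K_sub_exp_neg hx)
    (fun _ ht => hasDerivAt_mul_K_sub_exp_neg (hx.trans_lt ht)) (fun t _ => K_nonneg t)
    tendsto_mul_K_sub_exp_neg_atTop]
  ring

lemma integrableOn_mul_K_Ioi {x : ℝ} (hx : 0 ≤ x) : IntegrableOn (fun t => t * K t) (Ioi x) :=
  integrableOn_Ioi_deriv_of_nonneg (continuousWithinAt_sq_mul_K_sub_exp_neg hx)
    (fun _ ht => hasDerivAt_sq_mul_K_sub_exp_neg (hx.trans_lt ht))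
    (fun t ht => mul_nonneg (hx.trans ht.le) (K_nonneg t)) tendsto_sq_mul_K_sub_exp_neg_atTop

lemma integral_mul_K_Ioi {x : ℝ} (hx : 0 ≤ x) :
    ∫ t in Ioi x, t * K t = (x + 1) * exp (-x) / 4 - x ^ 2 * K x / 2 := by
  rw [integral_Ioi_of_hasDerivAt_of_nonneg (continuousWithinAt_sq_mul_K_sub_exp_neg hx)
    (fun _ ht => hasDerivAt_sq_mul_K_sub_exp_neg (hx.trans_lt ht))
    (fun t ht => mul_nonneg (hx.trans ht.le) (K_nonneg t)) tendsto_sq_mul_K_sub_exp_neg_atTop]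
  ring

lemma exp_neg_div_le_K {t : ℝ} (ht : 0 < t) : exp (-t) / (2 * (1 + t)) ≤ K t := by
  set G : ℝ → ℝ := fun s => -(exp (-s) / (2 * (1 + s)))
  set ψ : ℝ → ℝ := fun s => exp (-s) * (2 + s) / (2 * (1 + s) ^ 2)
  have hG : ∀ s, 0 < s → HasDerivAt G (ψ s) s := fun s hs => by
    refine (((hasDerivAt_exp_neg s).div (((hasDerivAt_id' s).const_add 1).const_mul 2)
      (by positivity)).neg).congr_deriv ?_
    simp only [ψ]
    field_simp
    ring
  have hcont : ContinuousWithinAt G (Ici t) t := (hG t ht).continuousAt.continuousWithinAt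
  have hderiv : ∀ s ∈ Ioi t, HasDerivAt G (ψ s) s := fun s hs => hG s (ht.trans hs)
  have hψ : ∀ s ∈ Ioi t, 0 ≤ ψ s := fun s hs => by
    have := ht.trans hs
    positivity
  have hlim : Tendsto G atTop (𝓝 0) := by
    have : Tendsto (fun s => exp (-s) / (2 * (1 + s))) atTop (𝓝 0) :=
      squeeze_zero' (eventually_atTop.2 ⟨0, fun s hs => by positivity⟩)
        (eventually_atTop.2 ⟨0, fun s hs =>
          div_le_div_of_nonneg_left (exp_pos _).le two_pos (by linarith)⟩)
        (by simpa using tendsto_exp_neg_atTop_nhds_zero.div_const 2)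
    simpa using this.neg
  have hψle : ∫ s in Ioi t, ψ s ≤ ∫ s in Ioi t, 1 / 2 * (exp (-s) / s) :=
    setIntegral_mono_on (integrableOn_Ioi_deriv_of_nonneg hcont hderiv hψ hlim)
      ((integrableOn_exp_neg_div_Ioi ht).const_mul _) measurableSet_Ioi fun s hs => by
        have hs0 := ht.trans hs
        calc ψ s = exp (-s) / (2 * s) * (s * (2 + s) / (1 + s) ^ 2) := by
              simp only [ψ]; field_simp
          _ ≤ exp (-s) / (2 * s) * 1 := by
              gcongr; rw [div_le_one (by positivity)]; nlinarith
          _ = 1 / 2 * (exp (-s) / s) := by field_simp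
  rw [integral_Ioi_of_hasDerivAt_of_nonneg hcont hderiv hψ hlim, integral_const_mul] at hψle
  rw [K, abs_of_pos ht]
  linarith

lemma integrable_comp_abs {E : Type*} [NormedAddCommGroup E] {f : ℝ → E}
    (hf : IntegrableOn f (Ioi 0)) : Integrable (fun x => f |x|) := by
  have hIoi : IntegrableOn (fun x => f |x|) (Ioi 0) :=
    hf.congr_fun (fun x hx => by rw [abs_of_pos hx]) measurableSet_Ioi
  have hIic : IntegrableOn (fun x => f |x|) (Iic 0) := by
    have hneg : MeasurableEmbedding fun x : ℝ => -x := (Homeomorph.neg ℝ).measurableEmbedding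
    rw [← Measure.map_neg_eq_self (volume : Measure ℝ), hneg.integrableOn_map_iff]
    simpa [Function.comp_def, neg_Iic] using Iff.mpr integrableOn_Ici_iff_integrableOn_Ioi hIoi
  have := hIic.union hIoi
  rwa [Iic_union_Ioi, integrableOn_univ] at this

lemma integrable_K : Integrable K := by
  simpa [K_abs] using integrable_comp_abs (integrableOn_K_Ioi le_rfl)

lemma integral_K : ∫ s, K s = 1 := by
  rw [← funext K_abs, integral_comp_abs, integral_K_Ioi le_rfl]
  norm_num

lemma integrable_mul_K : Integrable (fun s => s * K s) :=
  (integrable_comp_abs (integrableOn_mul_K_Ioi le_rfl)).mono'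
    (continuous_id.aestronglyMeasurable.mul integrable_K.aestronglyMeasurable)
    (Eventually.of_forall fun s => by
      rw [norm_mul, norm_of_nonneg (K_nonneg s), norm_eq_abs, K_abs])

lemma integral_mul_K : ∫ s, s * K s = 0 := by
  have h := integral_neg_eq_self (fun s => s * K s) volume
  simp only [K_neg, neg_mul, integral_neg] at h
  linarith

lemma integrable_K_mul_affine (a b : ℝ) : Integrable (fun s => K s * (a + b * s)) :=
  ((integrable_K.const_mul a).add (integrable_mul_K.const_mul b)).congr
    (Eventually.of_forall fun s => by simp only [Pi.add_apply]; ring)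

lemma integral_K_mul_affine (a b : ℝ) : ∫ s, K s * (a + b * s) = a := by
  have hsplit : (fun s => K s * (a + b * s)) = fun s => a * K s + b * (s * K s) := by
    ext s; ring
  rw [hsplit, integral_add (integrable_K.const_mul a) (integrable_mul_K.const_mul b),
    integral_const_mul, integral_const_mul, integral_K, integral_mul_K]
  ring

lemma integrableOn_K_mul_affine_Ioi {x : ℝ} (hx : 0 ≤ x) (a b : ℝ) :
    IntegrableOn (fun s => K s * (a + b * s)) (Ioi x) := by
  refine IntegrableOn.congr_fun (f := fun s => a * K s + b * (s * K s)) ?_ (fun s _ => by ring)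
    measurableSet_Ioi
  exact ((integrableOn_K_Ioi hx).const_mul a).add ((integrableOn_mul_K_Ioi hx).const_mul b)

lemma integral_K_mul_affine_Ioi {x : ℝ} (hx : 0 ≤ x) (a b : ℝ) :
    ∫ s in Ioi x, K s * (a + b * s) =
      a * (exp (-x) / 2 - x * K x) + b * ((x + 1) * exp (-x) / 4 - x ^ 2 * K x / 2) := by
  have hsplit : (fun s => K s * (a + b * s)) = fun s => a * K s + b * (s * K s) := by
    ext s; ring
  rw [hsplit, integral_add ((integrableOn_K_Ioi hx).const_mul a)
      ((integrableOn_mul_K_Ioi hx).const_mul b),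
    integral_const_mul, integral_const_mul, integral_K_Ioi hx, integral_mul_K_Ioi hx]

lemma integral_Ioi_zero_comp_sub {E : Type*} [NormedAddCommGroup E] [NormedSpace ℝ E]
    {f : ℝ → E} (hf : Integrable f) (x : ℝ) :
    ∫ y in Ioi 0, f (x - y) = (∫ s, f s) - ∫ s in Ioi x, f s := by
  rw [← intervalIntegral.integral_Iio_add_Ici hf.integrableOn hf.integrableOn,
    integral_Ici_eq_integral_Ioi, add_sub_cancel_right,
    ← integral_indicator measurableSet_Ioi, ← integral_indicator measurableSet_Iio,
    ← integral_sub_left_eq_self _ volume x]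
  congr 1 with y
  simp [indicator_apply]

lemma exp_neg_div_four_mul_sub_nonneg {x : ℝ} (hx : 0 ≤ x) :
    0 ≤ exp (-x) / 4 * (1 + x) - x / 2 * K x * (2 + x) := by
  have h : ∫ s in Ioi x, exp (-s) / 2 ≤ ∫ s in Ioi x, K s * (1 + 1 * s) :=
    setIntegral_mono_on ((integrableOn_exp_neg_Ioi x).div_const 2)
      (integrableOn_K_mul_affine_Ioi hx 1 1) measurableSet_Ioi fun s hs => by
        have hs0 := hx.trans_lt hs
        have := exp_neg_div_le_K hs0
        rw [div_le_iff₀ (by positivity)] at this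
        linarith
  rw [integral_div, integral_exp_neg_Ioi, integral_K_mul_affine_Ioi hx] at h
  linarith

theorem supersol_affine (x : ℝ) (hx : 0 ≤ x) :
    (1 + x) - (∫ y in Set.Ioi (0:ℝ), K (x - y) * (1 + y)) =
        Real.exp (-x) / 4 * (1 + x) - x / 2 * K x * (2 + x) ∧
      0 ≤ Real.exp (-x) / 4 * (1 + x) - x / 2 * K x * (2 + x) := by
  have hconv : ∫ y in Ioi 0, K (x - y) * (1 + y) =
      (∫ s, K s * ((1 + x) + (-1) * s)) - ∫ s in Ioi x, K s * ((1 + x) + (-1) * s) := by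
    rw [← integral_Ioi_zero_comp_sub (integrable_K_mul_affine (1 + x) (-1)) x]
    congr 1 with y
    ring
  rw [integral_K_mul_affine (1 + x) (-1), integral_K_mul_affine_Ioi hx] at hconv
  exact ⟨by rw [hconv]; ring, exp_neg_div_four_mul_sub_nonneg hx⟩
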